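/- Let B be a dihedral Artin group with odd parameter m_B ≥ 3, u_B = b₁b₂, and δ_B = (b₁b₂)^{m_B} the generator of the center. Let m_A be even, β ∈ B and t ∈ ℤ such that, setting p = gcd(t, m_B) and q = m_B/p, q divides m_A/2. Then Π(b₁, b₁⁻¹βu_B^tβ⁻¹, m_A) = Π(b₁⁻¹βu_B^tβ⁻¹, b₁, m_A); consequently a₁ ↦ b₁, a₂ ↦ b₁⁻¹βu_B^tβ⁻¹ extends to a homomorphism from the dihedral Artin group of even parameter m_A to B. -/

import Mathlib

/-- The alternating product `a*b*a*b*⋯` of length `n`. -/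
def altProd {G : Type*} [Monoid G] : G → G → ℕ → G
  | _, _, 0 => 1
  | a, b, n + 1 => a * altProd b a n

/-- Defining relation of the dihedral Artin group with parameter `m`;
the generators are `FreeGroup.of false, FreeGroup.of true`. -/
def dihedralRels (m : ℕ) : Set (FreeGroup Bool) :=
  { altProd (FreeGroup.of false) (FreeGroup.of true) m *
    (altProd (FreeGroup.of true) (FreeGroup.of false) m)⁻¹ }

lemma altProd_step {G : Type*} [Monoid G] (a b : G) (n : ℕ) :
    altProd a b (n + 2) = (a * b) * altProd a b n := by
  simp [altProd, mul_assoc]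

lemma altProd_two_mul {G : Type*} [Monoid G] (a b : G) :
    ∀ n : ℕ, altProd a b (2 * n) = (a * b) ^ n
  | 0 => by simp [altProd]
  | n + 1 => by
    have h : 2 * (n + 1) = 2 * n + 2 := by ring
    rw [h, altProd_step, altProd_two_mul a b n, ← pow_succ']

lemma altProd_odd {G : Type*} [Monoid G] (a b : G) :
    ∀ n : ℕ, altProd a b (2 * n + 1) = (a * b) ^ n * a
  | 0 => by simp [altProd]
  | n + 1 => by
    have h : 2 * (n + 1) + 1 = (2 * n + 1) + 2 := by ring
    rw [h, altProd_step, altProd_odd a b n, ← mul_assoc, ← pow_succ']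

lemma map_altProd {G H : Type*} [Monoid G] [Monoid H] (φ : G →* H) :
    ∀ (a b : G) (n : ℕ), φ (altProd a b n) = altProd (φ a) (φ b) n
  | _, _, 0 => by simp [altProd]
  | a, b, n + 1 => by simp [altProd, map_altProd φ b a n]

/-- Abstract commutation lemma: if `(xy)^k x = y (xy)^k` then `(xy)^(2k+1)`
commutes with both `x` and `y`. -/
lemma dihedral_aux {G : Type*} [Group G] (x y : G) (k m : ℕ) (hm : m = 2 * k + 1)
    (hrel : (x * y) ^ k * x = y * (x * y) ^ k) :
    x * (x * y) ^ m = (x * y) ^ m * x ∧ y * (x * y) ^ m = (x * y) ^ m * y := by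
  set u := x * y with hu
  have hkey : u ^ (k + 1) = x * (u ^ k * x) := by
    calc u ^ (k + 1) = x * y * u ^ k := by rw [pow_succ' u k, hu]
    _ = x * (y * u ^ k) := by rw [mul_assoc]
    _ = x * (u ^ k * x) := by rw [← hrel]
  have hm' : m = k + (k + 1) := by omega
  constructor
  · calc x * u ^ m = x * (u ^ k * u ^ (k + 1)) := by rw [hm', pow_add]
    _ = x * (u ^ k * (x * (u ^ k * x))) := by rw [hkey]
    _ = (x * (u ^ k * x)) * (u ^ k * x) := by simp [mul_assoc]
    _ = u ^ (k + 1) * u ^ k * x := by rw [← hkey, mul_assoc]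
    _ = u ^ m * x := by rw [← pow_add]; congr 2; omega
  · refine Eq.symm ?_
    calc u ^ m * y = u ^ k * u ^ (k + 1) * y := by rw [hm', pow_add]
    _ = u ^ k * (x * (u ^ k * x)) * y := by rw [hkey]
    _ = u ^ k * x * (u ^ k * (x * y)) := by simp [mul_assoc]
    _ = u ^ k * x * (u ^ k * u) := by rw [← hu]
    _ = (u ^ k * x) * u ^ (k + 1) := by rw [← pow_succ]
    _ = (y * u ^ k) * u ^ (k + 1) := by rw [hrel]
    _ = y * u ^ m := by rw [mul_assoc, ← pow_add]; congr 2; omega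

lemma dihedral_rel (m : ℕ) :
    altProd (PresentedGroup.of false : PresentedGroup (dihedralRels m))
        (PresentedGroup.of true) m
      = altProd (PresentedGroup.of true) (PresentedGroup.of false) m := by
  have h : PresentedGroup.mk (dihedralRels m)
      (altProd (FreeGroup.of false) (FreeGroup.of true) m *
        (altProd (FreeGroup.of true) (FreeGroup.of false) m)⁻¹) = 1 := by
    apply (QuotientGroup.eq_one_iff _).mpr
    exact Subgroup.subset_normalClosure rfl
  rw [map_mul, map_inv, map_altProd, map_altProd] at h
  exact mul_inv_eq_one.mp h

lemma delta_central (m k : ℕ) (hm : m = 2 * k + 1)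
    (g : PresentedGroup (dihedralRels m)) :
    Commute g ((PresentedGroup.of false * PresentedGroup.of true) ^ m) := by
  subst hm
  have h1 := dihedral_rel (2 * k + 1)
  rw [altProd_odd, altProd_odd] at h1
  have hsc : SemiconjBy (PresentedGroup.of true : PresentedGroup (dihedralRels (2 * k + 1)))
      (PresentedGroup.of false * PresentedGroup.of true)
      (PresentedGroup.of true * PresentedGroup.of false) := by
    simp [SemiconjBy, mul_assoc]
  have hrel := h1.trans (hsc.pow_right k).eq.symm
  obtain ⟨hcx, hcy⟩ := dihedral_aux (PresentedGroup.of false)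
    (PresentedGroup.of true) k (2 * k + 1) rfl hrel
  have hmem : g ∈ Subgroup.centralizer
      {((PresentedGroup.of false * PresentedGroup.of true :
          PresentedGroup (dihedralRels (2 * k + 1))) ^ (2 * k + 1))} := by
    refine PresentedGroup.generated_by (dihedralRels (2 * k + 1)) _ ?_ g
    intro j
    rcases j with _ | _
    · refine Subgroup.mem_centralizer_iff.mpr ?_
      intro h hh
      rw [Set.eq_of_mem_singleton hh]
      exact hcx.symm
    · refine Subgroup.mem_centralizer_iff.mpr ?_
      intro h hh
      rw [Set.eq_of_mem_singleton hh]
      exact hcy.symm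
  exact (Subgroup.mem_centralizer_iff.mp hmem _ rfl).symm

/-- in a dihedral Artin group `B` with odd parameter `m_B ≥ 3`,
for even `m_A`, `β ∈ B` and `t ∈ ℤ` with `q = m_B / gcd(t, m_B)` dividing
`m_A/2`, the elements `b₁` and `b₁⁻¹ β u_B^t β⁻¹` satisfy the Artin relation of
length `m_A`; hence `a₁ ↦ b₁`, `a₂ ↦ b₁⁻¹ β u_B^t β⁻¹` defines a homomorphism
from the dihedral Artin group with parameter `m_A` to `B`. -/
theorem stmt11 (mB : ℕ) (hoddB : Odd mB) (hmB : 3 ≤ mB)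
    (mA : ℕ) (hevenA : Even mA)
    (β : PresentedGroup (dihedralRels mB)) (t : ℤ)
    (hq : (mB / Int.gcd t (mB : ℤ)) ∣ (mA / 2))
    (b₁ uB c : PresentedGroup (dihedralRels mB))
    (hb₁ : b₁ = PresentedGroup.of false)
    (hu : uB = PresentedGroup.of false * PresentedGroup.of true)
    (hc : c = b₁⁻¹ * β * uB ^ t * β⁻¹) :
    altProd b₁ c mA = altProd c b₁ mA ∧
    ∃ φ : PresentedGroup (dihedralRels mA) →* PresentedGroup (dihedralRels mB),
      φ (PresentedGroup.of false) = b₁ ∧ φ (PresentedGroup.of true) = c := by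
  obtain ⟨k, hk⟩ := hoddB
  set n := mA / 2 with hn
  have hmA : mA = 2 * n := by
    obtain ⟨r, hr⟩ := hevenA; omega
  have hcen : ∀ g : PresentedGroup (dihedralRels mB), Commute g (uB ^ mB) := by
    intro g; rw [hu]; exact delta_central mB k hk g
  have hdvd : (mB : ℤ) ∣ t * (n : ℤ) := by
    obtain ⟨s, hs⟩ := hq
    obtain ⟨t', ht'⟩ := (Int.gcd_dvd_left t (mB : ℤ) : (Int.gcd t (mB : ℤ) : ℤ) ∣ t)
    have h2 : Int.gcd t (mB : ℤ) ∣ mB :=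
      Int.natCast_dvd_natCast.mp (Int.gcd_dvd_right t (mB : ℤ))
    have hmBg : ((Int.gcd t (mB : ℤ) : ℕ) : ℤ) * ((mB / Int.gcd t (mB : ℤ) : ℕ) : ℤ)
        = (mB : ℤ) := by exact_mod_cast Nat.mul_div_cancel' h2
    have hns : (n : ℤ) = ((mB / Int.gcd t (mB : ℤ) : ℕ) : ℤ) * (s : ℤ) := by
      exact_mod_cast hs
    have key : ∀ G M : ℤ, G * M = (mB : ℤ) → t = G * t' → (n : ℤ) = M * (s : ℤ) →
        t * (n : ℤ) = (mB : ℤ) * (t' * (s : ℤ)) := by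
      intro G M h1 h2' h3
      rw [h2', h3, ← h1]; ring
    exact ⟨t' * (s : ℤ), key _ _ hmBg ht' hns⟩
  obtain ⟨w, hw⟩ := hdvd
  have hz : ∀ g : PresentedGroup (dihedralRels mB),
      Commute g (uB ^ (t * (n : ℤ))) := by
    intro g
    rw [hw, zpow_mul, zpow_natCast]
    exact (hcen g).zpow_right w
  have hbc : b₁ * c = β * uB ^ t * β⁻¹ := by rw [hc]; group
  have hzval : (b₁ * c) ^ n = uB ^ (t * (n : ℤ)) := by
    rw [hbc, conj_pow, ← zpow_natCast (uB ^ t), ← zpow_mul, (hz β).eq,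
      mul_inv_cancel_right]
  have key1 : altProd b₁ c mA = uB ^ (t * (n : ℤ)) := by
    rw [hmA, altProd_two_mul, hzval]
  have key2 : altProd c b₁ mA = uB ^ (t * (n : ℤ)) := by
    rw [hmA, altProd_two_mul]
    have hsc : SemiconjBy c (b₁ * c) (c * b₁) := by simp [SemiconjBy, mul_assoc]
    have h3 : c * (b₁ * c) ^ n = (c * b₁) ^ n * c := (hsc.pow_right n).eq
    calc (c * b₁) ^ n = c * (b₁ * c) ^ n * c⁻¹ := by
          rw [h3, mul_inv_cancel_right]
      _ = uB ^ (t * (n : ℤ)) := by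
          rw [hzval, (hz c).eq, mul_inv_cancel_right]
  have hmain : altProd b₁ c mA = altProd c b₁ mA := key1.trans key2.symm
  refine ⟨hmain, ?_⟩
  have hrels : ∀ r ∈ dihedralRels mA,
      FreeGroup.lift (fun x : Bool => cond x c b₁) r = 1 := by
    intro r hr
    rw [Set.eq_of_mem_singleton hr]
    rw [map_mul, map_inv, map_altProd, map_altProd, FreeGroup.lift_apply_of,
      FreeGroup.lift_apply_of]
    simp only [cond_true, cond_false]
    rw [hmain, mul_inv_cancel]
  exact ⟨PresentedGroup.toGroup hrels, PresentedGroup.toGroup.of hrels,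
    PresentedGroup.toGroup.of hrels⟩
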